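/- Every decomposable tournament with at least 8 vertices that embeds a diamond is not {−3}-self dual. -/

import Mathlib

/-- A (finite) tournament on a vertex type `V`: for each pair of distinct
vertices exactly one arc. -/
structure Tournament (V : Type*) where
  arc : V → V → Prop
  irrefl : ∀ x, ¬ arc x x
  total : ∀ x y, x ≠ y → (arc x y ↔ ¬ arc y x)

namespace Tournament

variable {V W : Type*}

/-- The dual tournament, obtained by reversing all arcs. -/
def dual (T : Tournament V) : Tournament V where
  arc x y := T.arc y x
  irrefl x := T.irrefl x
  total x y h := T.total y x (Ne.symm h)

/-- The subtournament induced on a subset `X` of the vertex set. -/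
def restrict (T : Tournament V) (X : Set V) : Tournament X where
  arc x y := T.arc x y
  irrefl x := T.irrefl x
  total x y h := T.total x y (fun e => h (Subtype.ext e))

/-- Isomorphism of tournaments: an arc-preserving bijection. -/
def Iso (T : Tournament V) (T' : Tournament W) : Prop :=
  ∃ e : V ≃ W, ∀ x y, T.arc x y ↔ T'.arc (e x) (e y)

/-- `I` is an interval of `T`: every vertex outside `I` dominates all of `I`
or is dominated by all of `I`. -/
def IsInterval (T : Tournament V) (I : Set V) : Prop :=
  ∀ x ∉ I, (∀ y ∈ I, T.arc x y) ∨ (∀ y ∈ I, T.arc y x)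

/-- A tournament is indecomposable if all its intervals are trivial. -/
def Indecomposable (T : Tournament V) : Prop :=
  ∀ I : Set V, T.IsInterval I → I = ∅ ∨ I = Set.univ ∨ ∃ x, I = {x}

def Decomposable (T : Tournament V) : Prop := ¬ T.Indecomposable

/-- Transitive tournament (a linear order). -/
def Transitive (T : Tournament V) : Prop :=
  ∀ x y z, T.arc x y → T.arc y z → T.arc x z

/-- An almost transitive tournament is obtained from a transitive tournament
with at least 3 vertices by reversing the arc between its two extremal
vertices. -/
def AlmostTransitive [Fintype V] (T : Tournament V) : Prop :=
  3 ≤ Fintype.card V ∧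
  ∃ T₀ : Tournament V, T₀.Transitive ∧
    ∃ a b : V, a ≠ b ∧ (∀ y, y ≠ a → T₀.arc a y) ∧ (∀ y, y ≠ b → T₀.arc y b) ∧
      T.arc b a ∧
      ∀ x y, ¬ ((x = a ∧ y = b) ∨ (x = b ∧ y = a)) → (T.arc x y ↔ T₀.arc x y)

/-- Strong connectedness: a directed path between any two distinct vertices. -/
def StronglyConnected (T : Tournament V) : Prop :=
  ∀ x y : V, x ≠ y → Relation.TransGen T.arc x y

/-- `{k}`-hypomorphy: the induced subtournaments on every `k`-element set of
vertices are isomorphic. -/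
def Hypo (T T' : Tournament V) (k : ℕ) : Prop :=
  ∀ X : Set V, X.ncard = k → (T.restrict X).Iso (T'.restrict X)

/-- `{-k}`-hypomorphy, i.e. `{n-k}`-hypomorphy where `n` is the number of
vertices. -/
def MinusHypo [Fintype V] (T T' : Tournament V) (k : ℕ) : Prop :=
  Hypo T T' (Fintype.card V - k)

/-- Self duality. -/
def SelfDual (T : Tournament V) : Prop := T.Iso T.dual

/-- `{-k}`-self duality: removing any `k` vertices yields a self dual
tournament. -/
def MinusSelfDual (T : Tournament V) (k : ℕ) : Prop :=
  ∀ X : Set V, X.ncard = k → (T.restrict Xᶜ).SelfDual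

/-- `{-k}`-reconstructibility: every tournament `{-k}`-hypomorphic to `T` is
isomorphic to `T`. -/
def MinusReconstructible [Fintype V] (T : Tournament V) (k : ℕ) : Prop :=
  ∀ T' : Tournament V, MinusHypo T T' k → T.Iso T'

/-- Strong interval. -/
def IsStrongInterval (T : Tournament V) (X : Set V) : Prop :=
  T.IsInterval X ∧ ∀ Y : Set V, T.IsInterval Y → (X ∩ Y).Nonempty → X ⊆ Y ∨ Y ⊆ X

/-- `P T` : the maximal strong intervals of `T` distinct from the full vertex
set. -/
def P (T : Tournament V) : Set (Set V) :=
  {X | X.Nonempty ∧ X ≠ Set.univ ∧ T.IsStrongInterval X ∧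
    ∀ Y : Set V, Y ≠ Set.univ → T.IsStrongInterval Y → X ⊆ Y → X = Y}

/-- `Ptilde T` : equals `P T` when `T` is strongly connected; otherwise it
consists of the members of `P T` of size at least 2 together with the maximal
unions of consecutive singleton members (i.e. the maximal intervals of `T` all
of whose elements are singleton members of `P T`). -/
def Ptilde (T : Tournament V) : Set (Set V) :=
  {A | (T.StronglyConnected ∧ A ∈ T.P) ∨
    (¬ T.StronglyConnected ∧
      ((A ∈ T.P ∧ 2 ≤ A.ncard) ∨
        (A.Nonempty ∧ (∀ x ∈ A, ({x} : Set V) ∈ T.P) ∧ T.IsInterval A ∧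
          ∀ B : Set V, A ⊆ B → (∀ x ∈ B, ({x} : Set V) ∈ T.P) →
            T.IsInterval B → A = B)))}

/-- Equality of the quotients of `T` and `T'` by a common interval partition
`Part`: between any two distinct blocks, the arcs of `T` and `T'` agree. -/
def QuotientEq (T T' : Tournament V) (Part : Set (Set V)) : Prop :=
  ∀ X ∈ Part, ∀ Y ∈ Part, X ≠ Y → ∀ x ∈ X, ∀ y ∈ Y, (T.arc x y ↔ T'.arc x y)

/-- The set of vertices outside `I` dominated by every vertex of `I`. -/
def Iplus (T : Tournament V) (I : Set V) : Set V :=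
  {x | x ∉ I ∧ ∀ y ∈ I, T.arc y x}

/-- The set of vertices outside `I` dominating every vertex of `I`. -/
def Iminus (T : Tournament V) (I : Set V) : Set V :=
  {x | x ∉ I ∧ ∀ y ∈ I, T.arc x y}

/-- The 3-cycle `C₃`. -/
def C3Tour : Tournament (Fin 3) where
  arc x y := (x = 0 ∧ y = 1) ∨ (x = 1 ∧ y = 2) ∨ (x = 2 ∧ y = 0)
  irrefl := by decide
  total := by decide

/-- The transitive tournament `O_q` on `q` vertices. -/
def LinOrd (q : ℕ) : Tournament (Fin q) where
  arc x y := x < y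
  irrefl x := lt_irrefl x
  total x y h := by
    constructor
    · exact fun hxy hyx => lt_asymm hxy hyx
    · intro hyx
      exact lt_of_le_of_ne (not_lt.mp hyx) h

/-- The positive diamond `δ⁺` (on `{0,1,2,3}`, cycle `0→1→2→0`, all dominating
the center `3`). -/
def DeltaPlus : Tournament (Fin 4) where
  arc x y := (x = 0 ∧ y = 1) ∨ (x = 1 ∧ y = 2) ∨ (x = 2 ∧ y = 0) ∨
    (x = 0 ∧ y = 3) ∨ (x = 1 ∧ y = 3) ∨ (x = 2 ∧ y = 3)
  irrefl := by decide
  total := by decide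

/-- The negative diamond `δ⁻`. -/
def DeltaMinus : Tournament (Fin 4) := DeltaPlus.dual

/-- `T` embeds a diamond: some 4-element subset of the vertices induces a
diamond. -/
def EmbedsDiamond (T : Tournament V) : Prop :=
  ∃ X : Set V, X.ncard = 4 ∧
    ((T.restrict X).Iso DeltaPlus ∨ (T.restrict X).Iso DeltaMinus)

/-- `X` is a positive diamond of `T` with center `d`. -/
def IsPosDiamond (T : Tournament V) (X : Set V) (d : V) : Prop :=
  X.ncard = 4 ∧ d ∈ X ∧ (T.restrict X).Iso DeltaPlus ∧
    (T.restrict (X \ {d})).Iso C3Tour ∧ ∀ y ∈ X \ {d}, T.arc y d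

/-- `X` is a negative diamond of `T` with center `d`. -/
def IsNegDiamond (T : Tournament V) (X : Set V) (d : V) : Prop :=
  X.ncard = 4 ∧ d ∈ X ∧ (T.restrict X).Iso DeltaMinus ∧
    (T.restrict (X \ {d})).Iso C3Tour ∧ ∀ y ∈ X \ {d}, T.arc d y

/-- The tournament obtained from `H` by dilating the vertex `x` by `R`. -/
def Dilate {α β : Type*} (H : Tournament α) (x : α) (R : Tournament β) :
    Tournament ({y : α // y ≠ x} ⊕ β) where
  arc u v :=
    match u, v with
    | .inl y, .inl z => H.arc y.1 z.1
    | .inl y, .inr _ => H.arc y.1 x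
    | .inr _, .inl z => H.arc x z.1
    | .inr u, .inr v => R.arc u v
  irrefl u := by
    cases u with
    | inl y => exact H.irrefl y.1
    | inr u => exact R.irrefl u
  total u v h := by
    cases u with
    | inl y =>
      cases v with
      | inl z =>
        exact H.total y.1 z.1 (fun e => h (congrArg Sum.inl (Subtype.ext e)))
      | inr v => exact H.total y.1 x y.2
    | inr u =>
      cases v with
      | inl z => exact H.total x z.1 (Ne.symm z.2)
      | inr v => exact R.total u v (fun e => h (congrArg Sum.inr e))

/-- The class `I_{n,K}` (for `K` a set of positive integers representing the
negative indices): tournaments on `n` vertices which are indecomposable, not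
self dual, and `{-k}`-self dual for every `k ∈ K`. -/
def ClassI (n : ℕ) (K : Set ℕ) (R : Tournament (Fin n)) : Prop :=
  R.Indecomposable ∧ ¬ R.SelfDual ∧ ∀ k ∈ K, R.MinusSelfDual k

/-- Membership (up to isomorphism) in the class
`Ω_n = C₃(I_{n-2,{-1,-2,-3}}) ∪ O₃(I_{n-2,{-1,-2,-3}}) ∪ O₂(I_{n-1,{-2,-3}})`. -/
def InOmega (n : ℕ) (T : Tournament V) : Prop :=
  (∃ R : Tournament (Fin (n - 2)), ClassI (n - 2) {1, 2, 3} R ∧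
    ∃ x : Fin 3, T.Iso (Dilate C3Tour x R)) ∨
  (∃ R : Tournament (Fin (n - 2)), ClassI (n - 2) {1, 2, 3} R ∧
    ∃ x : Fin 3, T.Iso (Dilate (LinOrd 3) x R)) ∨
  (∃ R : Tournament (Fin (n - 1)), ClassI (n - 1) {2, 3} R ∧
    ∃ x : Fin 2, T.Iso (Dilate (LinOrd 2) x R))

end Tournament

/-! Let `I` be an interval with at least two vertices and `I ≠ V`, and let `I⁻` and `I⁺` be the
vertices dominating and dominated by `I`, so that all arcs between the three parts run
`I⁻ → I → I⁺`. Suppose that `T` is `{-3}`-self dual. For a pattern `P` on `k ≤ n - 3` vertices,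
the self duality of `T - X` matches the copies of `P` avoiding a 3-set `X` with those of the
reversed pattern; averaging over 3-sets and inclusion–exclusion then match the copies of `P` and
of its reverse through any set of at most three vertices. Applied to `δ⁺` and to two tournaments
on five vertices placed through an arc `x → x'` of `I`, this shows that no 3-cycle has two
vertices in `I` and that `I⁻` and `I⁺` carry no 3-cycle. A diamond then produces a triple
`β → α → d`, `β → d` with `β, d ∈ I⁺` and `α ∈ I⁻`, and every such triple produces another one
starting at `d` and ending at an out-neighbour of `d` in `I⁺`; this descends forever in the
transitive tournament `I⁺`. -/

theorem Set.ncard_le_three {α : Type*} (a b c : α) : ({a, b, c} : Set α).ncard ≤ 3 :=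
  (Set.ncard_insert_le _ _).trans <| Nat.succ_le_succ <|
    (Set.ncard_insert_le _ _).trans (by rw [Set.ncard_singleton])

namespace Tournament

variable {V : Type*} (T : Tournament V)

theorem arc_asymm {u v : V} (huv : T.arc u v) (hvu : T.arc v u) : False :=
  (T.total u v fun h => T.irrefl v (h ▸ hvu)).mp huv hvu

theorem ne_of_arc {u v : V} (h : T.arc u v) : u ≠ v := by
  rintro rfl
  exact T.irrefl u h

theorem arc_or_arc_of_ne {u v : V} (h : u ≠ v) : T.arc u v ∨ T.arc v u :=
  or_iff_not_imp_left.mpr (T.total v u h.symm).mpr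

theorem SelfDual.dual {W : Type*} {S : Tournament W} (h : S.SelfDual) : S.dual.SelfDual :=
  let ⟨e, he⟩ := h
  ⟨e, fun u v => he v u⟩

theorem MinusSelfDual.dual {T : Tournament V} {k : ℕ} (h : T.MinusSelfDual k) :
    T.dual.MinusSelfDual k :=
  fun X hX => (h X hX).dual

theorem IsInterval.dual {T : Tournament V} {I : Set V} (h : T.IsInterval I) :
    T.dual.IsInterval I :=
  fun v hv => (h v hv).symm

section Patterns

variable {k : ℕ}

/-- `f` is a copy of the pattern `L`, a list of arcs between `k` slots; arcs between slots
that `L` does not relate are arbitrary. -/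
def Realizes (L : List (Fin k × Fin k)) (f : Fin k → V) : Prop :=
  Function.Injective f ∧ ∀ p ∈ L, T.arc (f p.1) (f p.2)

def Covers (L : List (Fin k × Fin k)) (Y : Set V) : Prop :=
  ∃ f, T.Realizes L f ∧ Y ⊆ Set.range f

def IsComplete (L : List (Fin k × Fin k)) : Prop :=
  ∀ i j, i ≠ j → (i, j) ∈ L ∨ (j, i) ∈ L

theorem realizes_of_isComplete {L : List (Fin k × Fin k)} (hL : IsComplete L) {f : Fin k → V}
    (h : ∀ p ∈ L, T.arc (f p.1) (f p.2)) : T.Realizes L f := by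
  refine ⟨fun i j hij => by_contra fun hne => ?_, h⟩
  rcases hL i j hne with hp | hp
  · exact T.irrefl (f j) (hij ▸ h _ hp)
  · exact T.irrefl (f i) (hij ▸ h _ hp)

end Patterns

section Counting

variable [Fintype V] {k : ℕ}

open Finset
open scoped Classical

noncomputable def avoidCount (L : List (Fin k × Fin k)) (S : Finset V) : ℕ :=
  #{f : Fin k → V | T.Realizes L f ∧ ∀ i, f i ∉ S}

noncomputable def coverCount (L : List (Fin k × Fin k)) (Y : Finset V) : ℕ :=
  #{f : Fin k → V | T.Realizes L f ∧ (Y : Set V) ⊆ Set.range f}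

theorem covers_iff_coverCount_pos {L : List (Fin k × Fin k)} {Y : Finset V} :
    T.Covers L Y ↔ 0 < T.coverCount L Y := by
  simp [Covers, coverCount, Finset.card_pos, Finset.Nonempty]

/-- The self duality of `T - X`, extended by the identity on `X`, turns copies of `L` avoiding
`X` into copies of the reversed pattern. -/
theorem avoidCount_le_avoidCount_swap {X : Finset V} (hX : (T.restrict (↑X)ᶜ).SelfDual)
    (L : List (Fin k × Fin k)) :
    T.avoidCount L X ≤ T.avoidCount (L.map Prod.swap) X := by
  obtain ⟨e, he⟩ := hX
  set σ : Equiv.Perm V := e.subtypeCongr (Equiv.refl _)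
  have hσ : ∀ v (hv : v ∉ X), σ v = e ⟨v, by simpa using hv⟩ := fun v hv =>
    Equiv.Perm.subtypeCongr.left_apply _ _ _
  have hσX : ∀ v ∉ X, σ v ∉ X := fun v hv => by
    rw [hσ v hv]
    exact (e _).2
  refine card_le_card_of_injOn (σ ∘ ·) ?_ fun f _ g _ hfg => σ.injective.comp_left hfg
  intro f hf
  simp only [coe_filter, mem_univ, true_and, Set.mem_ofPred_eq] at hf ⊢
  obtain ⟨⟨hinj, harc⟩, havoid⟩ := hf
  refine ⟨⟨σ.injective.comp hinj, ?_⟩, fun i => hσX _ (havoid i)⟩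
  simp only [List.mem_map, Function.comp_apply, forall_exists_index, and_imp]
  rintro _ p hp rfl
  rw [Prod.fst_swap, Prod.snd_swap, hσ _ (havoid p.1), hσ _ (havoid p.2)]
  exact (he ⟨_, by simpa using havoid p.1⟩ ⟨_, by simpa using havoid p.2⟩).mp (harc p hp)

theorem avoidCount_swap_of_selfDual {X : Finset V} (hX : (T.restrict (↑X)ᶜ).SelfDual)
    (L : List (Fin k × Fin k)) :
    T.avoidCount L X = T.avoidCount (L.map Prod.swap) X :=
  (T.avoidCount_le_avoidCount_swap hX L).antisymm <| by
    simpa using T.avoidCount_le_avoidCount_swap hX (L.map Prod.swap)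

theorem sum_avoidCount_supersets (L : List (Fin k × Fin k)) {S : Finset V} (hS : #S ≤ 3) :
    ∑ X ∈ {X ∈ univ.powersetCard 3 | S ⊆ X}, T.avoidCount L X =
      (Fintype.card V - k - #S).choose (3 - #S) * T.avoidCount L S := by
  set supersets : Finset (Finset V) := {X ∈ univ.powersetCard 3 | S ⊆ X}
  set copies : Finset (Fin k → V) := {f | T.Realizes L f ∧ ∀ i, f i ∉ S}
  have habove : ∀ X ∈ supersets, T.avoidCount L X =
      #(copies.bipartiteAbove (fun X f => ∀ i, f i ∉ X) X) := by
    intro X hX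
    simp only [supersets, mem_filter] at hX
    unfold avoidCount bipartiteAbove
    congr 1
    ext f
    simp only [copies, mem_filter, mem_univ, true_and]
    exact ⟨fun h => ⟨⟨h.1, fun i hi => h.2 i (hX.2 hi)⟩, h.2⟩, fun h => ⟨h.1.1, h.2⟩⟩
  have hbelow : ∀ f ∈ copies,
      #(supersets.bipartiteBelow (fun X f => ∀ i, f i ∉ X) f) =
        (Fintype.card V - k - #S).choose (3 - #S) := by
    intro f hf
    simp only [copies, mem_filter, mem_univ, true_and] at hf
    obtain ⟨⟨hinj, -⟩, havoid⟩ := hf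
    have : supersets.bipartiteBelow (fun X f => ∀ i, f i ∉ X) f =
        {X ∈ (univ \ univ.image f).powersetCard 3 | S ⊆ X} := by
      ext X
      simp only [supersets, bipartiteBelow, mem_filter, mem_powersetCard, subset_univ, true_and,
        subset_sdiff, disjoint_left, mem_image, not_exists]
      grind
    rw [this, card_filter_powersetCard_subset _ _ _ (by grind) hS,
      card_sdiff_of_subset (subset_univ _), card_image_of_injective _ hinj, card_univ,
      card_univ, Fintype.card_fin]
  rw [sum_congr rfl habove, sum_card_bipartiteAbove_eq_sum_card_bipartiteBelow,
    sum_congr rfl hbelow, sum_const, smul_eq_mul, mul_comm]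
  rfl

theorem coverCount_eq_sum_avoidCount (L : List (Fin k × Fin k)) (Y : Finset V) :
    (T.coverCount L Y : ℤ) = ∑ S ∈ Y.powerset, (-1) ^ #S * (T.avoidCount L S : ℤ) := by
  set missing : V → Finset (Fin k → V) := fun y => {f | y ∉ Set.range f}
  have h := inclusion_exclusion_sum_inf_compl Y missing
    (fun f => if T.Realizes L f then (1 : ℤ) else 0)
  simp only [sum_boole, smul_eq_mul] at h
  have hcover : ({f | T.Realizes L f ∧ ↑Y ⊆ Set.range f} : Finset (Fin k → V)) =
      {f ∈ Y.inf fun y => (missing y)ᶜ | T.Realizes L f} := by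
    ext f
    simp [missing, Finset.mem_inf, Set.subset_def, and_comm]
  have havoid : ∀ S : Finset V, ({f | T.Realizes L f ∧ ∀ i, f i ∉ S} : Finset (Fin k → V)) =
      {f ∈ S.inf missing | T.Realizes L f} := by
    intro S
    ext f
    simp only [missing, mem_filter, mem_univ, true_and, Finset.mem_inf, Set.mem_range]
    grind
  simp only [coverCount, avoidCount, hcover, havoid, h]

section MinusSelfDual

variable {T} (hmsd : T.MinusSelfDual 3) (hk : k + 3 ≤ Fintype.card V)
include hmsd hk

theorem avoidCount_swap_of_card_le_three (L : List (Fin k × Fin k)) {S : Finset V}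
    (hS : #S ≤ 3) : T.avoidCount L S = T.avoidCount (L.map Prod.swap) S := by
  refine Nat.eq_of_mul_eq_mul_left
    (Nat.choose_pos (n := Fintype.card V - k - #S) (k := 3 - #S) (by omega)) ?_
  rw [← sum_avoidCount_supersets _ _ hS, ← sum_avoidCount_supersets _ _ hS]
  refine sum_congr rfl fun X hX => T.avoidCount_swap_of_selfDual (hmsd _ ?_) L
  simp only [mem_filter, mem_powersetCard] at hX
  rw [Set.ncard_coe_finset, hX.1.2]

theorem coverCount_swap (L : List (Fin k × Fin k)) {Y : Finset V} (hY : #Y ≤ 3) :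
    T.coverCount L Y = T.coverCount (L.map Prod.swap) Y := by
  zify
  rw [coverCount_eq_sum_avoidCount, coverCount_eq_sum_avoidCount]
  refine sum_congr rfl fun S hS => ?_
  rw [avoidCount_swap_of_card_le_three hmsd hk L ((card_le_card (mem_powerset.mp hS)).trans hY)]

theorem Covers.swap {L : List (Fin k × Fin k)} {Y : Set V} (hY : Y.ncard ≤ 3)
    (h : T.Covers L Y) : T.Covers (L.map Prod.swap) Y := by
  obtain ⟨Y, rfl⟩ := Y.toFinite.exists_finset_coe
  rw [Set.ncard_coe_finset] at hY
  rw [covers_iff_coverCount_pos] at h ⊢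
  rwa [← coverCount_swap hmsd hk L hY]

theorem Covers.of_swap {L : List (Fin k × Fin k)} {Y : Set V} (hY : Y.ncard ≤ 3)
    (h : T.Covers (L.map Prod.swap) Y) : T.Covers L Y := by
  simpa using h.swap hmsd hk hY

end MinusSelfDual

end Counting

section Intervals

variable {I : Set V}

theorem Iminus_arc {u v : V} (hu : u ∈ T.Iminus I) (hv : v ∈ I) : T.arc u v := hu.2 v hv

theorem Iplus_arc {u v : V} (hu : u ∈ T.Iplus I) (hv : v ∈ I) : T.arc v u := hu.2 v hv

theorem mem_or_mem_Iminus_or_mem_Iplus (hI : T.IsInterval I) (v : V) :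
    v ∈ I ∨ v ∈ T.Iminus I ∨ v ∈ T.Iplus I := by
  by_cases hv : v ∈ I
  · exact .inl hv
  · exact .inr ((hI v hv).imp (⟨hv, ·⟩) (⟨hv, ·⟩))

theorem mem_Iplus_of_arc (hI : T.IsInterval I) {u v : V} (hu : u ∈ I) (hv : v ∉ I)
    (h : T.arc u v) : v ∈ T.Iplus I :=
  ⟨hv, (hI v hv).resolve_left fun hvI => T.arc_asymm h (hvI u hu)⟩

theorem mem_Iminus_of_arc (hI : T.IsInterval I) {u v : V} (hu : u ∈ I) (hv : v ∉ I)
    (h : T.arc v u) : v ∈ T.Iminus I :=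
  ⟨hv, (hI v hv).resolve_right fun hIv => T.arc_asymm h (hIv u hu)⟩

open Classical in
noncomputable def layer (I : Set V) (v : V) : Fin 3 :=
  if v ∈ I then 0 else if v ∈ T.Iminus I then 1 else 2

theorem layer_eq_zero_iff {v : V} : T.layer I v = 0 ↔ v ∈ I := by
  unfold layer
  split_ifs <;> simp_all

theorem layer_eq_one_iff {v : V} : T.layer I v = 1 ↔ v ∈ T.Iminus I := by
  unfold layer
  split_ifs <;> simp_all [Iminus]

theorem mem_Iplus_of_layer_eq_two (hI : T.IsInterval I) {v : V} (h : T.layer I v = 2) :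
    v ∈ T.Iplus I := by
  unfold layer at h
  split_ifs at h with hvI hvA
  · simp at h
  · simp at h
  · exact ⟨hvI, (hI v hvI).resolve_left fun hv => hvA ⟨hvI, hv⟩⟩

theorem layer_eq_two_of_mem_Iplus {x v : V} (hx : x ∈ I) (hv : v ∈ T.Iplus I) :
    T.layer I v = 2 := by
  have hvA : v ∉ T.Iminus I := fun hvA => T.arc_asymm (T.Iminus_arc hvA hx) (T.Iplus_arc hv hx)
  simp [layer, hv.1, hvA]

/-- An arc from layer `ℓ` to layer `ℓ'` reverses one of the arcs `I⁻ → I → I⁺` forced by the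
interval `I`, where the layers `0`, `1`, `2` stand for `I`, `I⁻`, `I⁺`. -/
def LayersReversed (ℓ ℓ' : Fin 3) : Prop :=
  (ℓ = 0 ∧ ℓ' = 1) ∨ (ℓ = 2 ∧ ℓ' = 0)

instance : DecidableRel LayersReversed := fun _ _ => by
  unfold LayersReversed
  infer_instance

theorem not_layersReversed_of_arc (hI : T.IsInterval I) {u v : V} (h : T.arc u v) :
    ¬ LayersReversed (T.layer I u) (T.layer I v) := by
  rintro (⟨hu, hv⟩ | ⟨hu, hv⟩)
  · rw [layer_eq_zero_iff] at hu
    rw [layer_eq_one_iff] at hv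
    exact T.arc_asymm h (T.Iminus_arc hv hu)
  · rw [layer_eq_zero_iff] at hv
    exact T.arc_asymm h (T.Iplus_arc (T.mem_Iplus_of_layer_eq_two hI hu) hv)

variable {k : ℕ}

/-- What a copy `f` of `L` through an arc `f a → f b` of `I` and a vertex `f c ∉ I` reveals
about the layers `lay = T.layer I ∘ f` of its slots. Statements about such shapes for a fixed
pattern are finite and are checked by `decide`. -/
def LayerShape (L : List (Fin k × Fin k)) (lay : Fin k → Fin 3) (a b c : Fin k) : Prop :=
  a ≠ b ∧ a ≠ c ∧ b ≠ c ∧ lay a = 0 ∧ lay b = 0 ∧ (b, a) ∉ L ∧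
    ∀ p ∈ L, ¬ LayersReversed (lay p.1) (lay p.2)

instance (L : List (Fin k × Fin k)) (lay : Fin k → Fin 3) (a b c : Fin k) :
    Decidable (LayerShape L lay a b c) := by
  unfold LayerShape
  infer_instance

theorem exists_layerShape (hI : T.IsInterval I) {L : List (Fin k × Fin k)} {x x' u : V}
    (hx : x ∈ I) (hx' : x' ∈ I) (hxx' : T.arc x x') (hu : u ∉ I) (h : T.Covers L {x, x', u}) :
    ∃ f, T.Realizes L f ∧ ∃ a b c, f a = x ∧ f b = x' ∧ f c = u ∧
      LayerShape L (T.layer I ∘ f) a b c := by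
  obtain ⟨f, hf, hcov⟩ := h
  obtain ⟨a, rfl⟩ := hcov (by simp : x ∈ ({x, x', u} : Set V))
  obtain ⟨b, rfl⟩ := hcov (by simp : x' ∈ ({f a, x', u} : Set V))
  obtain ⟨c, rfl⟩ := hcov (by simp : u ∈ ({f a, f b, u} : Set V))
  refine ⟨f, hf, a, b, c, rfl, rfl, rfl, ?_, ?_, ?_, ?_, ?_, ?_, ?_⟩
  · exact fun h => T.ne_of_arc hxx' (congrArg f h)
  · exact fun h => hu (h ▸ hx)
  · exact fun h => hu (h ▸ hx')
  · exact (T.layer_eq_zero_iff).mpr hx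
  · exact (T.layer_eq_zero_iff).mpr hx'
  · exact fun hba => T.arc_asymm hxx' (hf.2 _ hba)
  · exact fun p hp => T.not_layersReversed_of_arc hI (hf.2 p hp)

end Intervals

section ConcretePatterns

/-- The arcs of `DeltaPlus`. -/
def diamondPattern : List (Fin 4 × Fin 4) := [(0, 1), (1, 2), (2, 0), (0, 3), (1, 3), (2, 3)]

/-- The 3-cycle `0 → 1 → 2 → 0` dominating the arc `3 → 4`. -/
def cycleArcPattern : List (Fin 5 × Fin 5) :=
  [(0, 1), (1, 2), (2, 0), (0, 3), (1, 3), (2, 3), (0, 4), (1, 4), (2, 4), (3, 4)]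

/-- `δ⁺` with a cycle vertex dilated by the arc `0 → 1`: the 3-cycle `2 → {0, 1} → 3 → 2`
dominating `4`. -/
def dilatedDiamondPattern : List (Fin 5 × Fin 5) :=
  [(0, 1), (2, 0), (2, 1), (0, 3), (1, 3), (3, 2), (2, 4), (3, 4), (0, 4), (1, 4)]

theorem isComplete_diamondPattern_swap : IsComplete (diamondPattern.map Prod.swap) := by
  unfold IsComplete
  decide

theorem isComplete_cycleArcPattern_swap : IsComplete (cycleArcPattern.map Prod.swap) := by
  unfold IsComplete
  decide

theorem isComplete_dilatedDiamondPattern : IsComplete dilatedDiamondPattern := by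
  unfold IsComplete
  decide

variable {k : ℕ}

def HasCycleMeetingLayerZeroTwice (L : List (Fin k × Fin k)) (lay : Fin k → Fin 3) : Prop :=
  ∃ s t u, (s, t) ∈ L ∧ (t, u) ∈ L ∧ (u, s) ∈ L ∧ lay s = 0 ∧ lay t = 0

set_option synthInstance.maxSize 512 in
instance (L : List (Fin k × Fin k)) (lay : Fin k → Fin 3) :
    Decidable (HasCycleMeetingLayerZeroTwice L lay) := by
  unfold HasCycleMeetingLayerZeroTwice
  infer_instance

theorem layerShape_diamondPattern :
    ∀ lay a b c, LayerShape diamondPattern lay a b c → lay c ≠ 1 := by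
  decide +kernel

theorem layerShape_cycleArcPattern : ∀ lay a b c, LayerShape cycleArcPattern lay a b c →
    lay c = 2 → HasCycleMeetingLayerZeroTwice cycleArcPattern lay := by
  decide +kernel

set_option synthInstance.maxSize 512 in
theorem layerShape_dilatedDiamondPattern_swap : ∀ lay a b c,
    LayerShape (dilatedDiamondPattern.map Prod.swap) lay a b c → lay c = 2 →
      ∃ z y, lay z = 1 ∧ lay y = 1 ∧ (c, z) ∈ dilatedDiamondPattern.map Prod.swap ∧
        (y, c) ∈ dilatedDiamondPattern.map Prod.swap ∧
        (y, z) ∈ dilatedDiamondPattern.map Prod.swap := by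
  decide +kernel

/-- A vertex of a copy of `δ⁺` with an out-neighbour in the copy is not its centre. -/
theorem exists_common_out_of_covers_diamondPattern {p q r : V} (hpq : T.arc p q)
    (hqr : T.arc q r) (hrp : T.arc r p) (h : T.Covers diamondPattern {p, q, r}) :
    ∃ w, T.arc p w ∧ T.arc q w ∧ T.arc r w := by
  obtain ⟨f, ⟨-, harc⟩, hcov⟩ := h
  have hcentre : ∀ i, i ≠ 3 → T.arc (f i) (f 3) := fun i hi =>
    harc (i, 3) (by revert i; decide)
  have hdom : ∀ {v v'}, v ∈ ({p, q, r} : Set V) → v' ∈ ({p, q, r} : Set V) → T.arc v v' →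
      T.arc v (f 3) := by
    intro v v' hv hv' hvv'
    obtain ⟨i, rfl⟩ := hcov hv
    obtain ⟨j, rfl⟩ := hcov hv'
    refine hcentre i fun hi => T.arc_asymm hvv' ?_
    exact hi ▸ hcentre j fun hj => T.ne_of_arc hvv' (by rw [hi, hj])
  exact ⟨f 3, hdom (by simp) (by simp) hpq, hdom (by simp) (by simp) hqr,
    hdom (by simp) (by simp) hrp⟩

end ConcretePatterns

section MainArgument

variable [Fintype V] {T} {I : Set V}

theorem not_cycle_of_mem_interval_of_mem_Iminus (hI : T.IsInterval I) (hmsd : T.MinusSelfDual 3)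
    (hn : 7 ≤ Fintype.card V) {w : V} (hw : w ∈ T.Iminus I) {x y z : V} (hx : x ∈ I)
    (hy : y ∈ I) (hz : z ∈ I) (hxy : T.arc x y) (hyz : T.arc y z) (hzx : T.arc z x) : False := by
  have hcov : T.Covers (diamondPattern.map Prod.swap) {x, y, w} := by
    refine ⟨![x, z, y, w], T.realizes_of_isComplete isComplete_diamondPattern_swap ?_, ?_⟩
    · simpa [diamondPattern] using ⟨hzx, hyz, hxy, hw.2 x hx, hw.2 z hz, hw.2 y hy⟩
    · simp [Set.insert_subset_iff]
  obtain ⟨f, -, a, b, c, -, -, rfl, hshape⟩ := T.exists_layerShape hI hx hy hxy hw.1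
    (hcov.of_swap hmsd (by omega) (Set.ncard_le_three _ _ _))
  exact layerShape_diamondPattern _ a b c hshape ((T.layer_eq_one_iff).mpr hw)

theorem not_cycle_of_mem_interval (hI : T.IsInterval I) (hIuniv : I ≠ Set.univ)
    (hmsd : T.MinusSelfDual 3) (hn : 7 ≤ Fintype.card V) {x y z : V} (hx : x ∈ I)
    (hy : y ∈ I) (hz : z ∈ I) (hxy : T.arc x y) (hyz : T.arc y z) (hzx : T.arc z x) : False := by
  obtain ⟨w, hw⟩ := (Set.ne_univ_iff_exists_notMem I).mp hIuniv
  rcases T.mem_or_mem_Iminus_or_mem_Iplus hI w with hwI | hwA | hwB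
  · exact hw hwI
  · exact not_cycle_of_mem_interval_of_mem_Iminus hI hmsd hn hwA hx hy hz hxy hyz hzx
  · exact not_cycle_of_mem_interval_of_mem_Iminus (T := T.dual) hI.dual hmsd.dual hn hwB hx hz hy
      hzx hyz hxy

theorem not_cycle_of_two_mem_interval (hI : T.IsInterval I) (hIuniv : I ≠ Set.univ)
    (hmsd : T.MinusSelfDual 3) (hn : 7 ≤ Fintype.card V) {x y z : V} (hx : x ∈ I)
    (hy : y ∈ I) (hxy : T.arc x y) (hyz : T.arc y z) (hzx : T.arc z x) : False := by
  rcases T.mem_or_mem_Iminus_or_mem_Iplus hI z with hz | hz | hz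
  · exact not_cycle_of_mem_interval hI hIuniv hmsd hn hx hy hz hxy hyz hzx
  · exact T.arc_asymm hyz (T.Iminus_arc hz hy)
  · exact T.arc_asymm hzx (T.Iplus_arc hz hx)

theorem not_cycle_of_mem_Iplus (hI : T.IsInterval I) (hIuniv : I ≠ Set.univ)
    (hmsd : T.MinusSelfDual 3) (hn : 8 ≤ Fintype.card V) {x x' : V} (hx : x ∈ I) (hx' : x' ∈ I)
    (hxx' : T.arc x x') {u v w : V} (hu : u ∈ T.Iplus I) (hv : v ∈ T.Iplus I)
    (hw : w ∈ T.Iplus I) (huv : T.arc u v) (hvw : T.arc v w) (hwu : T.arc w u) : False := by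
  have hcov : T.Covers (cycleArcPattern.map Prod.swap) {x, x', u} := by
    refine ⟨![v, u, w, x', x], T.realizes_of_isComplete isComplete_cycleArcPattern_swap ?_, ?_⟩
    · simpa [cycleArcPattern] using ⟨huv, hwu, hvw, hv.2 x' hx', hu.2 x' hx', hw.2 x' hx',
        hv.2 x hx, hu.2 x hx, hw.2 x hx, hxx'⟩
    · simp [Set.insert_subset_iff]
  obtain ⟨f, hf, a, b, c, -, -, rfl, hshape⟩ := T.exists_layerShape hI hx hx' hxx' hu.1
    (hcov.of_swap hmsd (by omega) (Set.ncard_le_three _ _ _))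
  obtain ⟨s, t, r, hst, htr, hrs, hs, ht⟩ :=
    layerShape_cycleArcPattern _ a b c hshape (T.layer_eq_two_of_mem_Iplus hx hu)
  exact not_cycle_of_two_mem_interval hI hIuniv hmsd (by omega) ((T.layer_eq_zero_iff).mp hs)
    ((T.layer_eq_zero_iff).mp ht) (hf.2 _ hst) (hf.2 _ htr) (hf.2 _ hrs)

theorem not_cycle_of_mem_Iminus (hI : T.IsInterval I) (hIuniv : I ≠ Set.univ)
    (hmsd : T.MinusSelfDual 3) (hn : 8 ≤ Fintype.card V) {x x' : V} (hx : x ∈ I) (hx' : x' ∈ I)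
    (hxx' : T.arc x x') {u v w : V} (hu : u ∈ T.Iminus I) (hv : v ∈ T.Iminus I)
    (hw : w ∈ T.Iminus I) (huv : T.arc u v) (hvw : T.arc v w) (hwu : T.arc w u) : False :=
  not_cycle_of_mem_Iplus (T := T.dual) hI.dual hIuniv hmsd.dual hn hx' hx hxx' hu hw hv hwu hvw huv

variable (T I) in
def IsZigzag (β α d : V) : Prop :=
  β ∈ T.Iplus I ∧ α ∈ T.Iminus I ∧ d ∈ T.Iplus I ∧ T.arc β α ∧ T.arc α d ∧ T.arc β d

/-- The vertex `α` dominates the 3-cycle `x → β → δ → x`; reversing this copy of `δ⁻` gives a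
common out-neighbour of the cycle, which lies in `I⁺`. -/
theorem exists_isZigzag_of_arc_Iplus_Iminus (hI : T.IsInterval I) (hmsd : T.MinusSelfDual 3)
    (hn : 7 ≤ Fintype.card V) {x : V} (hx : x ∈ I) {β δ α : V} (hβ : β ∈ T.Iplus I)
    (hδ : δ ∈ T.Iminus I) (hα : α ∈ T.Iminus I) (hβδ : T.arc β δ) (hαβ : T.arc α β)
    (hαδ : T.arc α δ) : ∃ w, T.IsZigzag I β δ w := by
  have hxβ : T.arc x β := T.Iplus_arc hβ hx
  have hδx : T.arc δ x := T.Iminus_arc hδ hx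
  have hcov : T.Covers (diamondPattern.map Prod.swap) {x, β, δ} := by
    refine ⟨![β, x, δ, α], T.realizes_of_isComplete isComplete_diamondPattern_swap ?_, ?_⟩
    · simpa [diamondPattern] using ⟨hxβ, hδx, hβδ, hαβ, hα.2 x hx, hαδ⟩
    · simp [Set.insert_subset_iff]
  obtain ⟨w, hxw, hβw, hδw⟩ := T.exists_common_out_of_covers_diamondPattern hxβ hβδ hδx
    (hcov.of_swap hmsd (by omega) (Set.ncard_le_three _ _ _))
  have hw : w ∉ I := fun hw => T.arc_asymm hβw (T.Iplus_arc hβ hw)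
  exact ⟨w, hβ, hδ, T.mem_Iplus_of_arc hI hx hw hxw, hβδ, hδw, hβw⟩

/-- A zigzag ending at `d` realizes the dilated diamond through `x → x'` and `d`; its reversal
produces the configuration of `exists_isZigzag_of_arc_Iplus_Iminus` at `d`. -/
theorem IsZigzag.exists_next (hI : T.IsInterval I) (hmsd : T.MinusSelfDual 3)
    (hn : 8 ≤ Fintype.card V) {x x' : V} (hx : x ∈ I) (hx' : x' ∈ I) (hxx' : T.arc x x')
    {β α d : V} (h : T.IsZigzag I β α d) : ∃ z w, T.IsZigzag I d z w := by
  obtain ⟨hβ, hα, hd, hβα, hαd, hβd⟩ := h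
  have hcov : T.Covers dilatedDiamondPattern {x, x', d} := by
    refine ⟨![x, x', α, β, d], T.realizes_of_isComplete isComplete_dilatedDiamondPattern ?_, ?_⟩
    · simpa [dilatedDiamondPattern] using ⟨hxx', hα.2 x hx, hα.2 x' hx', hβ.2 x hx, hβ.2 x' hx',
        hβα, hαd, hβd, hd.2 x hx, hd.2 x' hx'⟩
    · simp [Set.insert_subset_iff]
  obtain ⟨f, hf, a, b, c, -, -, rfl, hshape⟩ := T.exists_layerShape hI hx hx' hxx' hd.1
    (hcov.swap hmsd (by omega) (Set.ncard_le_three _ _ _))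
  obtain ⟨z, y, hz, hy, hcz, hyc, hyz⟩ :=
    layerShape_dilatedDiamondPattern_swap _ a b c hshape (T.layer_eq_two_of_mem_Iplus hx hd)
  obtain ⟨w, hw⟩ := exists_isZigzag_of_arc_Iplus_Iminus hI hmsd (by omega) hx hd
    ((T.layer_eq_one_iff).mp hz) ((T.layer_eq_one_iff).mp hy) (hf.2 _ hcz) (hf.2 _ hyc)
    (hf.2 _ hyz)
  exact ⟨f z, w, hw⟩

/-- `I⁺` has no 3-cycle, so the arcs inside `I⁺` form a well-founded order, along which
`IsZigzag.exists_next` would descend forever. -/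
theorem not_isZigzag (hI : T.IsInterval I) (hIuniv : I ≠ Set.univ) (hmsd : T.MinusSelfDual 3)
    (hn : 8 ≤ Fintype.card V) {x x' : V} (hx : x ∈ I) (hx' : x' ∈ I) (hxx' : T.arc x x')
    (β α d : V) : ¬ T.IsZigzag I β α d := by
  let below : V → V → Prop := fun w d => d ∈ T.Iplus I ∧ w ∈ T.Iplus I ∧ T.arc d w
  have : IsTrans V below := ⟨by
    rintro a b c ⟨-, ha, hba⟩ ⟨hc, hb, hcb⟩
    refine ⟨hc, ha, ?_⟩
    rcases T.arc_or_arc_of_ne (u := c) (v := a) (by rintro rfl; exact T.arc_asymm hcb hba)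
      with hca | hac
    · exact hca
    · exact (not_cycle_of_mem_Iplus hI hIuniv hmsd hn hx hx' hxx' hc hb ha hcb hba hac).elim⟩
  have : Std.Irrefl below := ⟨fun a h => T.irrefl a h.2.2⟩
  induction d using (Finite.wellFounded_of_trans_of_irrefl below).induction generalizing β α with
  | _ d ih =>
    intro h
    obtain ⟨z, w, hw⟩ := h.exists_next hI hmsd hn hx hx' hxx'
    exact ih w ⟨hw.1, hw.2.2.1, hw.2.2.2.2.2⟩ d z hw

theorem exists_isZigzag_of_cycle_of_mem_interval (hI : T.IsInterval I) (hIuniv : I ≠ Set.univ)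
    (hmsd : T.MinusSelfDual 3) (hn : 7 ≤ Fintype.card V) {p q r s : V} (hp : p ∈ I)
    (hpq : T.arc p q) (hqr : T.arc q r) (hrp : T.arc r p) (hps : T.arc p s) (hqs : T.arc q s)
    (hrs : T.arc r s) : ∃ β α d, T.IsZigzag I β α d := by
  have hq : q ∈ T.Iplus I := T.mem_Iplus_of_arc hI hp
    (fun hq => not_cycle_of_two_mem_interval hI hIuniv hmsd hn hp hq hpq hqr hrp) hpq
  have hr : r ∈ T.Iminus I := T.mem_Iminus_of_arc hI hp
    (fun hr => not_cycle_of_two_mem_interval hI hIuniv hmsd hn hr hp hrp hpq hqr) hrp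
  have hs : s ∈ T.Iplus I := T.mem_Iplus_of_arc hI hp
    (fun hs => T.arc_asymm hqs (T.Iplus_arc hq hs)) hps
  exact ⟨q, r, s, hq, hr, hs, hqr, hrs, hqs⟩

theorem exists_isZigzag_of_cycle_of_mem_Iminus_of_mem_Iplus (hI : T.IsInterval I)
    (hmsd : T.MinusSelfDual 3) (hn : 7 ≤ Fintype.card V) {x : V} (hx : x ∈ I) {p q r s : V}
    (hp : p ∈ T.Iminus I) (hq : q ∈ T.Iplus I) (hpq : T.arc p q) (hqr : T.arc q r)
    (hrp : T.arc r p) (hps : T.arc p s) (hqs : T.arc q s) (hrs : T.arc r s) :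
    ∃ β α d, T.IsZigzag I β α d := by
  rcases T.mem_or_mem_Iminus_or_mem_Iplus hI s with hs | hs | hs
  · exact (T.arc_asymm hqs (T.Iplus_arc hq hs)).elim
  · obtain ⟨w, hw⟩ := exists_isZigzag_of_arc_Iplus_Iminus hI hmsd hn hx hq hs hp hqs hpq hps
    exact ⟨q, s, w, hw⟩
  · rcases T.mem_or_mem_Iminus_or_mem_Iplus hI r with hr | hr | hr
    · exact (T.arc_asymm hrp (T.Iminus_arc hp hr)).elim
    · exact ⟨q, r, s, hq, hr, hs, hqr, hrs, hqs⟩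
    · exact ⟨r, p, s, hr, hp, hs, hrp, hps, hrs⟩

/-- A 3-cycle avoiding `I` and meeting both `I⁻` and `I⁺` has an arc from `I⁻` to `I⁺`;
one inside `I⁻` or inside `I⁺` is excluded. -/
theorem exists_isZigzag_of_diamond (hI : T.IsInterval I) (hIuniv : I ≠ Set.univ)
    (hmsd : T.MinusSelfDual 3) (hn : 8 ≤ Fintype.card V) {x x' : V} (hx : x ∈ I) (hx' : x' ∈ I)
    (hxx' : T.arc x x') {p q r s : V} (hpq : T.arc p q) (hqr : T.arc q r) (hrp : T.arc r p)
    (hps : T.arc p s) (hqs : T.arc q s) (hrs : T.arc r s) : ∃ β α d, T.IsZigzag I β α d := by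
  have rotated : ∀ {p q r}, T.arc p q → T.arc q r → T.arc r p → T.arc p s → T.arc q s →
      T.arc r s → p ∈ I ∨ p ∈ T.Iminus I ∧ q ∈ T.Iplus I → ∃ β α d, T.IsZigzag I β α d :=
    fun hpq hqr hrp hps hqs hrs h => h.elim
      (fun hp => exists_isZigzag_of_cycle_of_mem_interval hI hIuniv hmsd (by omega) hp hpq hqr
        hrp hps hqs hrs)
      (fun ⟨hp, hq⟩ => exists_isZigzag_of_cycle_of_mem_Iminus_of_mem_Iplus hI hmsd (by omega) hx
        hp hq hpq hqr hrp hps hqs hrs)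
  by_cases h : (p ∈ I ∨ p ∈ T.Iminus I ∧ q ∈ T.Iplus I) ∨ (q ∈ I ∨ q ∈ T.Iminus I ∧ r ∈ T.Iplus I)
      ∨ (r ∈ I ∨ r ∈ T.Iminus I ∧ p ∈ T.Iplus I)
  · rcases h with h | h | h
    exacts [rotated hpq hqr hrp hps hqs hrs h, rotated hqr hrp hpq hqs hrs hps h,
      rotated hrp hpq hqr hrs hps hqs h]
  have hp := T.mem_or_mem_Iminus_or_mem_Iplus hI p
  have hq := T.mem_or_mem_Iminus_or_mem_Iplus hI q
  have hr := T.mem_or_mem_Iminus_or_mem_Iplus hI r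
  have : (p ∈ T.Iminus I ∧ q ∈ T.Iminus I ∧ r ∈ T.Iminus I) ∨
      (p ∈ T.Iplus I ∧ q ∈ T.Iplus I ∧ r ∈ T.Iplus I) := by
    grind
  rcases this with ⟨hp, hq, hr⟩ | ⟨hp, hq, hr⟩
  · exact (not_cycle_of_mem_Iminus hI hIuniv hmsd hn hx hx' hxx' hp hq hr hpq hqr hrp).elim
  · exact (not_cycle_of_mem_Iplus hI hIuniv hmsd hn hx hx' hxx' hp hq hr hpq hqr hrp).elim

end MainArgument

variable {T}

theorem Decomposable.exists_arc_in_interval (h : T.Decomposable) :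
    ∃ I, T.IsInterval I ∧ I ≠ Set.univ ∧ ∃ x ∈ I, ∃ x' ∈ I, T.arc x x' := by
  simp only [Decomposable, Indecomposable, not_forall, not_or, not_exists] at h
  obtain ⟨I, hI, hIempty, hIuniv, hIsingle⟩ := h
  obtain ⟨x, hx⟩ := Set.nonempty_iff_ne_empty.mpr hIempty
  obtain ⟨x', hx', hne⟩ := ((Set.nontrivial_iff_ne_singleton hx).mpr (hIsingle x)).exists_ne x
  rcases T.arc_or_arc_of_ne hne with h | h
  exacts [⟨I, hI, hIuniv, x', hx', x, hx, h⟩, ⟨I, hI, hIuniv, x, hx, x', hx', h⟩]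

theorem Iso.exists_cycle_dominating {X : Set V} (h : (T.restrict X).Iso DeltaPlus) :
    ∃ p q r s, T.arc p q ∧ T.arc q r ∧ T.arc r p ∧ T.arc p s ∧ T.arc q s ∧ T.arc r s := by
  obtain ⟨e, he⟩ := h
  have harc : ∀ i j, DeltaPlus.arc i j → T.arc (e.symm i) (e.symm j) := fun i j hij =>
    (he _ _).mpr (by simpa using hij)
  exact ⟨e.symm 0, e.symm 1, e.symm 2, e.symm 3, harc 0 1 (by simp [DeltaPlus]),
    harc 1 2 (by simp [DeltaPlus]), harc 2 0 (by simp [DeltaPlus]), harc 0 3 (by simp [DeltaPlus]),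
    harc 1 3 (by simp [DeltaPlus]), harc 2 3 (by simp [DeltaPlus])⟩

theorem Iso.dual_of_deltaMinus {X : Set V} (h : (T.restrict X).Iso DeltaMinus) :
    (T.dual.restrict X).Iso DeltaPlus :=
  let ⟨e, he⟩ := h
  ⟨e, fun x y => he y x⟩

theorem not_minusSelfDual_of_cycle_dominating [Fintype V] {I : Set V} (hI : T.IsInterval I)
    (hIuniv : I ≠ Set.univ) (hn : 8 ≤ Fintype.card V) {x x' : V} (hx : x ∈ I) (hx' : x' ∈ I)
    (hxx' : T.arc x x') {p q r s : V} (hpq : T.arc p q) (hqr : T.arc q r) (hrp : T.arc r p)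
    (hps : T.arc p s) (hqs : T.arc q s) (hrs : T.arc r s) : ¬ T.MinusSelfDual 3 := fun hmsd =>
  let ⟨β, α, d, h⟩ :=
    exists_isZigzag_of_diamond hI hIuniv hmsd hn hx hx' hxx' hpq hqr hrp hps hqs hrs
  not_isZigzag hI hIuniv hmsd hn hx hx' hxx' β α d h

end Tournament

/-- Every decomposable tournament with at least 8 vertices that
embeds a diamond is not `{-3}`-self dual. -/
theorem stmt13 {V : Type*} [Fintype V] (T : Tournament V)
    (hdec : T.Decomposable) (hcard : 8 ≤ Fintype.card V)
    (hd : T.EmbedsDiamond) :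
    ¬ T.MinusSelfDual 3 := by
  obtain ⟨I, hI, hIuniv, x, hx, x', hx', hxx'⟩ := hdec.exists_arc_in_interval
  obtain ⟨X, -, hX | hX⟩ := hd
  · obtain ⟨p, q, r, s, hpq, hqr, hrp, hps, hqs, hrs⟩ := hX.exists_cycle_dominating
    exact Tournament.not_minusSelfDual_of_cycle_dominating hI hIuniv hcard hx hx' hxx'
      hpq hqr hrp hps hqs hrs
  · obtain ⟨p, q, r, s, hpq, hqr, hrp, hps, hqs, hrs⟩ :=
      hX.dual_of_deltaMinus.exists_cycle_dominating
    exact fun hmsd => Tournament.not_minusSelfDual_of_cycle_dominating (T := T.dual) hI.dual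
      hIuniv hcard hx' hx hxx' hpq hqr hrp hps hqs hrs hmsd.dual
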